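/- arXiv:2110.10350 — 2 statements merged into one kernel-verified Lean document; each statement's English description precedes it below -/
import Mathlib

section
/- Let V be a valuation ring with algebraically closed fraction field, k the residue field of the valuation ring of some field C containing V with V → O_C, and V̄ the image of V in k. If V is the pullback of V̄ ⊂ k along O_C → k (i.e. V = O_C ×_k V̄), then to give a finite projective module over V is equivalent to giving finite projective modules over O_C and over V̄ together with an isomorphism of their base changes to k. -/
open CategoryTheory

universe v

/-- A gluing (Milnor patching) triple for the square of rings `f : B → D ← C : g`:
a finite projective `B`-module, a finite projective `C`-module, and an isomorphism of their
base changes to `D`. -/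
structure GlueObj {B C D : Type} [CommRing B] [CommRing C] [CommRing D]
    (f : B →+* D) (g : C →+* D) : Type (v + 1) where
  MB : ModuleCat.{v} B
  MC : ModuleCat.{v} C
  finB : Module.Finite B MB
  projB : Module.Projective B MB
  finC : Module.Finite C MC
  projC : Module.Projective C MC
  glue : (ModuleCat.extendScalars.{0, 0, v} f).obj MB ≅ (ModuleCat.extendScalars.{0, 0, v} g).obj MC

namespace GlueObj

variable {B C D : Type} [CommRing B] [CommRing C] [CommRing D]
    {f : B →+* D} {g : C →+* D}

/-- Morphisms of gluing triples. -/
@[ext]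
structure Hom (X Y : GlueObj.{v} f g) where
  hB : X.MB ⟶ Y.MB
  hC : X.MC ⟶ Y.MC
  comm : (ModuleCat.extendScalars f).map hB ≫ Y.glue.hom
      = X.glue.hom ≫ (ModuleCat.extendScalars g).map hC

instance : Category (GlueObj.{v} f g) where
  Hom X Y := Hom X Y
  id X := ⟨𝟙 X.MB, 𝟙 X.MC, by simp⟩
  comp u v := ⟨u.hB ≫ v.hB, u.hC ≫ v.hC, by
    simp only [Functor.map_comp, Category.assoc, v.comm]
    rw [← Category.assoc, u.comm, Category.assoc]⟩
  id_comp u := by apply Hom.ext <;> simp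
  comp_id u := by apply Hom.ext <;> simp
  assoc u v w := by apply Hom.ext <;> simp

end GlueObj


/-!
`A = B ×_D C` is local: `φC a` a unit forces `f (φB a)` to be a unit, hence `φB a` is one since
`f` is a local homomorphism, and the two inverses glue to an inverse of `a`. So finite projective
`A`-modules are free and their category is that of matrices over `A`. A matrix over `A` is exactly
a pair of matrices over `B` and `C` with the same image over `D`, i.e. a morphism between free
gluing triples with the standard identification of their base changes. Conversely every gluing
triple is free over the local rings `B` and `C`, and its gluing isomorphism is standard up to an
automorphism of `Bⁿ`, because invertible matrices over `D` lift to invertible matrices over `B`.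
-/

open ChangeOfRings

namespace ModuleCat

variable {R S : Type} [CommRing R] [CommRing S] (f : R →+* S)

noncomputable def extendScalarsPiIso (n : ℕ) :
    (extendScalars.{0, 0, 0} f).obj (of R (Fin n → R)) ≅ of S (Fin n → S) :=
  let := f.toAlgebra
  (TensorProduct.piScalarRight R S S (Fin n)).toModuleIso

lemma extendScalarsPiIso_hom_tmul (n : ℕ) (s : S) (v : Fin n → R) :
    (extendScalarsPiIso f n).hom (s ⊗ₜ[R,f] v) = fun i => f (v i) * s :=
  let := f.toAlgebra
  TensorProduct.piScalarRightHom_tmul R S S (Fin n) s v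

lemma extendScalars_map_toLin' {n m : ℕ} (M : Matrix (Fin m) (Fin n) R) :
    (extendScalars f).map (ofHom (Matrix.toLin' M)) =
      (extendScalarsPiIso f n).hom ≫ ofHom (Matrix.toLin' (M.map f)) ≫
        (extendScalarsPiIso f m).inv := by
  rw [← Category.assoc, Iso.eq_comp_inv]
  ext v : 1
  change (extendScalarsPiIso f m).hom ((1 : S) ⊗ₜ[R,f] Matrix.toLin' M v) =
    Matrix.toLin' (M.map f) ((extendScalarsPiIso f n).hom ((1 : S) ⊗ₜ[R,f] v))
  rw [extendScalarsPiIso_hom_tmul, extendScalarsPiIso_hom_tmul]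
  ext i
  simp [Matrix.mulVec, dotProduct]

end ModuleCat

lemma Module.exists_linearEquiv_fin_fun_of_isLocalRing (R : Type) [CommRing R] [IsLocalRing R]
    (M : Type) [AddCommGroup M] [Module R M] [Module.Finite R M] [Module.Projective R M] :
    ∃ n : ℕ, Nonempty (M ≃ₗ[R] (Fin n → R)) :=
  have : Module.Free R M := Module.free_of_flat_of_isLocalRing
  ⟨_, ⟨(Module.finBasis R M).equivFun⟩⟩

lemma Matrix.exists_isUnit_det_map_eq {B D : Type} [CommRing B] [CommRing D] {f : B →+* D}
    [IsLocalHom f] (hf : Function.Surjective f) {ι : Type} [Fintype ι] [DecidableEq ι]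
    (T : Matrix ι ι D) (hT : IsUnit T.det) :
    ∃ U : Matrix ι ι B, IsUnit U.det ∧ U.map f = T := by
  choose U hU using fun i j => hf (T i j)
  have hUT : (Matrix.of U).map f = T := Matrix.ext hU
  refine ⟨Matrix.of U, (isUnit_map_iff f _).mp ?_, hUT⟩
  rwa [RingHom.map_det, RingHom.mapMatrix_apply, hUT]

section FreeModules

variable (R : Type) [CommRing R]

abbrev FinProjModuleCat : Type 1 :=
  ObjectProperty.FullSubcategory fun M : ModuleCat.{0} R =>
    Module.Finite R M ∧ Module.Projective R M

/-- Morphisms `n ⟶ m` are `m × n` matrices, acting on column vectors. -/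
abbrev MatCat (_R : Type) : Type := ℕ

instance : Category (MatCat R) where
  Hom n m := Matrix (Fin m) (Fin n) R
  id n := (1 : Matrix (Fin n) (Fin n) R)
  comp u v := v * u
  id_comp := Matrix.mul_one
  comp_id := Matrix.one_mul
  assoc u v w := (Matrix.mul_assoc w v u).symm

lemma MatCat.id_def (n : MatCat R) : 𝟙 n = (1 : Matrix (Fin n) (Fin n) R) := rfl

lemma MatCat.comp_def {n m p : ℕ} (u : Matrix (Fin m) (Fin n) R) (v : Matrix (Fin p) (Fin m) R) :
    @CategoryStruct.comp (MatCat R) _ n m p u v = v * u := rfl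

noncomputable def MatCat.toFinProj : MatCat R ⥤ FinProjModuleCat R where
  obj n := ⟨ModuleCat.of R (Fin n → R), inferInstance,
    inferInstance⟩
  map M := ⟨ModuleCat.ofHom (Matrix.toLin' M)⟩
  map_id _ := InducedCategory.hom_ext (ModuleCat.hom_ext Matrix.toLin'_one)
  map_comp M N := InducedCategory.hom_ext (ModuleCat.hom_ext (Matrix.toLin'_mul N M))

instance : (MatCat.toFinProj R).Full where
  map_surjective u := ⟨LinearMap.toMatrix' u.hom.hom,
    InducedCategory.hom_ext (ModuleCat.hom_ext (Matrix.toLin'_toMatrix' u.hom.hom))⟩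

instance : (MatCat.toFinProj R).Faithful where
  map_injective h := Matrix.toLin'.injective (congrArg (fun u => u.hom.hom) h)

instance [IsLocalRing R] : (MatCat.toFinProj R).EssSurj where
  mem_essImage M := by
    obtain ⟨_, _⟩ := M.property
    obtain ⟨n, ⟨e⟩⟩ := Module.exists_linearEquiv_fin_fun_of_isLocalRing R M.obj
    exact ⟨n, ⟨(ObjectProperty.fullyFaithfulι _).preimageIso e.symm.toModuleIso⟩⟩

instance [IsLocalRing R] : (MatCat.toFinProj R).IsEquivalence where

end FreeModules

namespace GlueObj

variable {B C D : Type} [CommRing B] [CommRing C] [CommRing D] {f : B →+* D} {g : C →+* D}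

@[ext] lemma hom_ext {X Y : GlueObj.{0} f g} {u v : X ⟶ Y} (hB : u.hB = v.hB) (hC : u.hC = v.hC) :
    u = v :=
  Hom.ext hB hC

@[simp] lemma id_hB (X : GlueObj.{0} f g) : Hom.hB (𝟙 X) = 𝟙 X.MB := rfl

@[simp] lemma id_hC (X : GlueObj.{0} f g) : Hom.hC (𝟙 X) = 𝟙 X.MC := rfl

@[simp] lemma comp_hB {X Y Z : GlueObj.{0} f g} (u : X ⟶ Y) (v : Y ⟶ Z) :
    (u ≫ v).hB = u.hB ≫ v.hB := rfl

@[simp] lemma comp_hC {X Y Z : GlueObj.{0} f g} (u : X ⟶ Y) (v : Y ⟶ Z) :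
    (u ≫ v).hC = u.hC ≫ v.hC := rfl

noncomputable def isoMk {X Y : GlueObj.{0} f g} (iB : X.MB ≅ Y.MB) (iC : X.MC ≅ Y.MC)
    (h : (ModuleCat.extendScalars f).map iB.hom ≫ Y.glue.hom =
      X.glue.hom ≫ (ModuleCat.extendScalars g).map iC.hom) : X ≅ Y where
  hom := ⟨iB.hom, iC.hom, h⟩
  inv := ⟨iB.inv, iC.inv, by
    rw [← cancel_epi ((ModuleCat.extendScalars f).map iB.hom), ← Functor.map_comp_assoc,
      iB.hom_inv_id, CategoryTheory.Functor.map_id, Category.id_comp, reassoc_of% h,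
      ← Functor.map_comp, iC.hom_inv_id, CategoryTheory.Functor.map_id, Category.comp_id]⟩
  hom_inv_id := hom_ext iB.hom_inv_id iC.hom_inv_id
  inv_hom_id := hom_ext iB.inv_hom_id iC.inv_hom_id

variable (f g)

noncomputable abbrev free (n : ℕ) : GlueObj.{0} f g where
  MB := ModuleCat.of B (Fin n → B)
  MC := ModuleCat.of C (Fin n → C)
  finB := inferInstance
  projB := inferInstance
  finC := inferInstance
  projC := inferInstance
  glue := ModuleCat.extendScalarsPiIso f n ≪≫ (ModuleCat.extendScalarsPiIso g n).symm

lemma free_glue_comm_iff {n m : ℕ} (P : Matrix (Fin m) (Fin n) B) (Q : Matrix (Fin m) (Fin n) C) :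
    (ModuleCat.extendScalars f).map (ModuleCat.ofHom (Matrix.toLin' P)) ≫ (free f g m).glue.hom =
        (free f g n).glue.hom ≫ (ModuleCat.extendScalars g).map (ModuleCat.ofHom (Matrix.toLin' Q)) ↔
      P.map f = Q.map g := by
  simp only [free, Iso.trans_hom, Iso.symm_hom, ModuleCat.extendScalars_map_toLin',
    Category.assoc, Iso.inv_hom_id_assoc, Iso.cancel_iso_hom_left, Iso.cancel_iso_inv_right]
  exact ⟨fun h => Matrix.toLin'.injective (congrArg ModuleCat.Hom.hom h), fun h => by rw [h]⟩

variable {f g}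

lemma fin_eq_of_extendScalars_iso [Nontrivial D] {n m : ℕ}
    (θ : (ModuleCat.extendScalars.{0, 0, 0} f).obj (ModuleCat.of B (Fin n → B)) ≅
      (ModuleCat.extendScalars.{0, 0, 0} g).obj (ModuleCat.of C (Fin m → C))) : n = m := by
  simpa using ((ModuleCat.extendScalarsPiIso f n).symm ≪≫ θ ≪≫
    ModuleCat.extendScalarsPiIso g m).toLinearEquiv.finrank_eq

lemma exists_iso_extendScalars_map_comp_eq [IsLocalHom f] (hf : Function.Surjective f) (n : ℕ)
    (θ : (ModuleCat.extendScalars f).obj (ModuleCat.of B (Fin n → B)) ≅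
      (ModuleCat.extendScalars g).obj (ModuleCat.of C (Fin n → C))) :
    ∃ U : ModuleCat.of B (Fin n → B) ≅ ModuleCat.of B (Fin n → B),
      (ModuleCat.extendScalars f).map U.hom ≫ (ModuleCat.extendScalarsPiIso f n).hom ≫
        (ModuleCat.extendScalarsPiIso g n).inv = θ.hom := by
  let ψ := (ModuleCat.extendScalarsPiIso f n).symm ≪≫ θ ≪≫ ModuleCat.extendScalarsPiIso g n
  obtain ⟨U, hU, hUψ⟩ := Matrix.exists_isUnit_det_map_eq hf (LinearMap.toMatrix' ψ.hom.hom)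
    (by simpa [LinearMap.det_toMatrix'] using ψ.toLinearEquiv.isUnit_det')
  refine ⟨(Matrix.toLinearEquiv' U (Matrix.invertibleOfIsUnitDet U hU)).toModuleIso, ?_⟩
  change (ModuleCat.extendScalars f).map (ModuleCat.ofHom (Matrix.toLin' U)) ≫ _ = _
  rw [ModuleCat.extendScalars_map_toLin', hUψ, Matrix.toLin'_toMatrix', ModuleCat.ofHom_hom]
  simp [ψ]

lemma exists_iso_free [IsLocalRing B] [IsLocalRing C] [Nontrivial D]
    (hf : Function.Surjective f) (X : GlueObj.{0} f g) : ∃ n, Nonempty (free f g n ≅ X) := by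
  have := X.finB; have := X.projB; have := X.finC; have := X.projC
  have : IsLocalHom f := IsLocalHom.of_surjective f hf
  obtain ⟨n, ⟨eB⟩⟩ := Module.exists_linearEquiv_fin_fun_of_isLocalRing B X.MB
  obtain ⟨m, ⟨eC⟩⟩ := Module.exists_linearEquiv_fin_fun_of_isLocalRing C X.MC
  let θ := (ModuleCat.extendScalars f).mapIso eB.toModuleIso.symm ≪≫ X.glue ≪≫
    (ModuleCat.extendScalars g).mapIso eC.toModuleIso
  obtain rfl := fin_eq_of_extendScalars_iso θ
  obtain ⟨U, hU⟩ := exists_iso_extendScalars_map_comp_eq hf n θ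
  refine ⟨n, ⟨(isoMk (eB.toModuleIso ≪≫ U) eC.toModuleIso ?_).symm⟩⟩
  simp only [Iso.trans_hom, Iso.symm_hom, Functor.map_comp, Category.assoc]
  rw [hU]
  simp only [θ, Iso.trans_hom, Functor.mapIso_hom, Iso.symm_hom, Iso.map_hom_inv_id_assoc]

end GlueObj

section FiberProduct

variable {A B C D : Type} [CommRing A] [CommRing B] [CommRing C] [CommRing D]
  {f : B →+* D} {g : C →+* D} {φB : A →+* B} {φC : A →+* C}

lemma isLocalHom_of_fiberProduct [IsLocalHom f] (hcomm : f.comp φB = g.comp φC)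
    (hinj : Function.Injective fun a : A => (φB a, φC a))
    (hsurj : ∀ (b : B) (c : C), f b = g c → ∃ a : A, φB a = b ∧ φC a = c) :
    IsLocalHom φC := by
  refine ⟨fun a hC => ?_⟩
  have hfg : f (φB a) = g (φC a) := RingHom.congr_fun hcomm a
  have hB : IsUnit (φB a) := (isUnit_map_iff f _).mp (hfg ▸ hC.map g)
  have hunits : Units.map (f : B →* D) hB.unit = Units.map (g : C →* D) hC.unit :=
    Units.ext hfg
  obtain ⟨a', haB, haC⟩ := hsurj ↑hB.unit⁻¹ ↑hC.unit⁻¹ (by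
    simpa using congrArg (fun u : Dˣ => ((u⁻¹ : Dˣ) : D)) hunits)
  refine IsUnit.of_mul_eq_one a' (hinj ?_)
  simp [haB, haC]

variable (hcomm : f.comp φB = g.comp φC)

noncomputable def MatCat.toGlue : MatCat A ⥤ GlueObj.{0} f g where
  obj n := GlueObj.free f g n
  map M := ⟨ModuleCat.ofHom (Matrix.toLin' (M.map φB)), ModuleCat.ofHom (Matrix.toLin' (M.map φC)),
    (GlueObj.free_glue_comm_iff f g _ _).2 (by
      rw [Matrix.map_map, Matrix.map_map, ← RingHom.coe_comp, hcomm, RingHom.coe_comp])⟩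
  map_id n := by ext : 1 <;> simp [MatCat.id_def]
  map_comp M N := by ext : 1 <;> simp [MatCat.comp_def, Matrix.map_mul]

lemma MatCat.toGlue_faithful (hinj : Function.Injective fun a : A => (φB a, φC a)) :
    (MatCat.toGlue hcomm).Faithful where
  map_injective {n m} M N h := by
    have hB : M.map φB = N.map φB :=
      Matrix.toLin'.injective (congrArg (fun u => u.hB.hom) h)
    have hC : M.map φC = N.map φC :=
      Matrix.toLin'.injective (congrArg (fun u => u.hC.hom) h)
    exact Matrix.ext fun i j => hinj (Prod.ext (congrFun₂ hB i j) (congrFun₂ hC i j))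

lemma MatCat.toGlue_full
    (hsurj : ∀ (b : B) (c : C), f b = g c → ∃ a : A, φB a = b ∧ φC a = c) :
    (MatCat.toGlue hcomm).Full where
  map_surjective {n m} u := by
    obtain ⟨uB, uC, hu⟩ := u
    obtain ⟨P, rfl⟩ : ∃ P, ModuleCat.ofHom (Matrix.toLin' P) = uB :=
      ⟨_, ModuleCat.hom_ext (Matrix.toLin'_toMatrix' uB.hom)⟩
    obtain ⟨Q, rfl⟩ : ∃ Q, ModuleCat.ofHom (Matrix.toLin' Q) = uC :=
      ⟨_, ModuleCat.hom_ext (Matrix.toLin'_toMatrix' uC.hom)⟩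
    choose M hMB hMC using fun i j =>
      hsurj (P i j) (Q i j) (congrFun₂ ((GlueObj.free_glue_comm_iff f g P Q).1 hu) i j)
    refine ⟨Matrix.of M, ?_⟩
    ext : 1
    · exact congrArg (fun P => ModuleCat.ofHom (Matrix.toLin' P)) (Matrix.ext hMB)
    · exact congrArg (fun Q => ModuleCat.ofHom (Matrix.toLin' Q)) (Matrix.ext hMC)

lemma MatCat.toGlue_isEquivalence [IsLocalRing B] [IsLocalRing C] [Nontrivial D]
    (hf : Function.Surjective f) (hinj : Function.Injective fun a : A => (φB a, φC a))
    (hsurj : ∀ (b : B) (c : C), f b = g c → ∃ a : A, φB a = b ∧ φC a = c) :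
    (MatCat.toGlue hcomm).IsEquivalence :=
  have := MatCat.toGlue_faithful hcomm hinj
  have := MatCat.toGlue_full hcomm hsurj
  { essSurj := ⟨GlueObj.exists_iso_free hf⟩ }

end FiberProduct

theorem milnor_patching_finite_projective_modules_general
    (B C D : Type) [CommRing B] [CommRing C] [Field D]
    [IsDomain B] [ValuationRing B] [IsDomain C] [ValuationRing C]
    (f : B →+* D) (g : C →+* D)
    (hf : Function.Surjective f)
    (A : Type) [CommRing A] (φB : A →+* B) (φC : A →+* C)
    (hcomm : f.comp φB = g.comp φC)
    (hinj : Function.Injective fun a : A => (φB a, φC a))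
    (hsurj : ∀ (b : B) (c : C), f b = g c → ∃ a : A, φB a = b ∧ φC a = c) :
    Nonempty
      ((ObjectProperty.FullSubcategory fun M : ModuleCat.{0} A =>
          Module.Finite A M ∧ Module.Projective A M) ≌ GlueObj.{0} f g) := by
  have : IsLocalHom f := IsLocalHom.of_surjective f hf
  have : IsLocalHom φC := isLocalHom_of_fiberProduct hcomm hinj hsurj
  have : IsLocalRing A := φC.domain_isLocalRing
  have := MatCat.toGlue_isEquivalence hcomm hf hinj hsurj
  exact ⟨(MatCat.toFinProj A).asEquivalence.symm.trans (MatCat.toGlue hcomm).asEquivalence⟩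

/-- Milnor patching for finite projective modules.  Let `B = O_C` be a valuation ring with residue
field `D = k` (via the surjection `f : B → D`), let `C = V̄ ⊆ k` be a subring of `k` which is a
valuation ring (with the injection `g : C → D`), and let `A = V` be the fiber product
`A = O_C ×_k V̄` (hypotheses `hcomm`, `hinj`, `hsurj`); in the motivating situation `V` is a
valuation ring with algebraically closed fraction field, `k` is the residue field of `O_C`,
and `V̄` is the image of `V` in `k`.  Then to give a finite projective module over `V = A` is
equivalent to giving finite projective modules over `O_C = B` and over `V̄ = C` together with
an isomorphism of their base changes to `k = D`: the category of finite projective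
`A`-modules is equivalent to the category of gluing triples. -/
theorem milnor_patching_finite_projective_modules
    (B C D : Type) [CommRing B] [CommRing C] [Field D]
    [IsDomain B] [ValuationRing B] [IsDomain C] [ValuationRing C]
    (f : B →+* D) (g : C →+* D)
    (hf : Function.Surjective f) (hg : Function.Injective g)
    (A : Type) [CommRing A] (φB : A →+* B) (φC : A →+* C)
    (hcomm : f.comp φB = g.comp φC)
    (hinj : Function.Injective fun a : A => (φB a, φC a))
    (hsurj : ∀ (b : B) (c : C), f b = g c → ∃ a : A, φB a = b ∧ φC a = c) :
    Nonempty
      ((ObjectProperty.FullSubcategory fun M : ModuleCat.{0} A =>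
          Module.Finite A M ∧ Module.Projective A M) ≌ GlueObj.{0} f g) :=
  milnor_patching_finite_projective_modules_general B C D f g hf A φB φC hcomm hinj hsurj
end

section
/- Let C be an algebraically closed nonarchimedean field of characteristic p with ring of integers O_C♭ of its tilt, A_inf = W(O_{C^♭}), μ = [ε] - 1 for a compatible system ε of p-power roots of unity, and ξ a generator of the kernel of θ : A_inf → O_C. Then the closed subset of Spec(A_inf) complementary to the open set Spec(A_inf[1/p]) ∪ Spec(A_inf[1/μ]) consists of exactly one point, namely the unique closed point; equivalently, A_inf/(p, μ) ≅ O_{C^♭}/(ε-1) where ε - 1 is a pseudouniformizer of O_{C^♭}. -/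
/-!
`W(O_{C^♭}) → O_{C^♭}`, `x ↦ x₀`, is surjective with kernel `(p)` since `O_{C^♭}` is perfect of
characteristic `p`, and it sends `μ = [ε] - 1` to `ε - 1`. Hence `A_inf/(p, μ) ≅ O_{C^♭}/(ε - 1)`,
and the primes of `A_inf` containing `p` and `μ` are the pullbacks of the primes of `O_{C^♭}`
containing `ε - 1`. As `O_{C^♭}` is a rank-one valuation ring and `ε - 1` is a pseudouniformizer,
the only such prime is the maximal ideal.
-/

open Ideal IsLocalRing

lemma IsLocalRing.eq_maximalIdeal_of_isPrime_of_ne_bot {B : Type*} [CommRing B] [IsLocalRing B]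
    (hrank : ∀ P : PrimeSpectrum B, P.asIdeal = ⊥ ∨ P.asIdeal.IsMaximal)
    {Q : Ideal B} [hQ : Q.IsPrime] (hQ_ne : Q ≠ ⊥) : Q = maximalIdeal B :=
  eq_maximalIdeal ((hrank ⟨Q, hQ⟩).resolve_left hQ_ne)

namespace Ideal

variable {A B : Type*} [CommRing A] [CommRing B] {f : A →+* B}

lemma comap_span_singleton_of_surjective (hf : Function.Surjective f) (a : A) :
    comap f (span {f a}) = span {a} ⊔ RingHom.ker f := by
  rw [← Set.image_singleton, ← map_span, comap_map_of_surjective' f hf]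

noncomputable def quotientSpanPairEquivOfKerEq (hf : Function.Surjective f) {b : A}
    (hb : RingHom.ker f = span {b}) (a : A) : A ⧸ span {b, a} ≃+* B ⧸ span {f a} :=
  have hker : RingHom.ker ((Quotient.mk (span {f a})).comp f) = span {b, a} := by
    rw [← RingHom.comap_ker, mk_ker, comap_span_singleton_of_surjective hf, hb, span_insert,
      sup_comm]
  (quotEquivOfEq hker.symm).trans
    (RingHom.quotientKerEquivOfSurjective (Quotient.mk_surjective.comp hf))

lemma mem_and_mem_iff_eq_comap_maximalIdeal [IsLocalRing B] (hf : Function.Surjective f)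
    {b : A} (hb : RingHom.ker f = span {b})
    (hrank : ∀ P : PrimeSpectrum B, P.asIdeal = ⊥ ∨ P.asIdeal.IsMaximal)
    {a : A} (ha₀ : f a ≠ 0) (ha : ¬IsUnit (f a)) (P : Ideal A) [P.IsPrime] :
    b ∈ P ∧ a ∈ P ↔ P = comap f (maximalIdeal B) := by
  constructor
  · rintro ⟨hbP, haP⟩
    have hker : RingHom.ker f ≤ P := hb ▸ (span_singleton_le_iff_mem P).2 hbP
    have : (map f P).IsPrime := map_isPrime_of_surjective hf hker
    have hmap : map f P = maximalIdeal B :=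
      eq_maximalIdeal_of_isPrime_of_ne_bot hrank fun h ↦
        ha₀ (by simpa [h] using mem_map_of_mem f haP)
    rw [← hmap, comap_map_of_surjective' f hf, sup_eq_left.2 hker]
  · rintro rfl
    have hfb : f b = 0 := RingHom.mem_ker.1 (hb ▸ mem_span_singleton_self b)
    exact ⟨by simp [hfb], ha⟩

end Ideal

open WittVector

theorem Ainf_complement_of_punctured_locus_is_closed_point_general
    (p : ℕ) [hp : Fact p.Prime]
    (R : Type) [CommRing R] [IsDomain R] [ValuationRing R] [CharP R p] [PerfectRing R p]
    (hrank : ∀ P : PrimeSpectrum R, P.asIdeal = ⊥ ∨ P.asIdeal.IsMaximal)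
    (ε : R)
    (hps1 : ε - 1 ≠ 0) (hps2 : ¬ IsUnit (ε - 1)) :
    (∃! P : PrimeSpectrum (WittVector p R),
        (p : WittVector p R) ∈ P.asIdeal ∧
          (WittVector.teichmuller p ε - 1) ∈ P.asIdeal) ∧
    (∀ P : PrimeSpectrum (WittVector p R),
        (p : WittVector p R) ∈ P.asIdeal →
          (WittVector.teichmuller p ε - 1) ∈ P.asIdeal → P.asIdeal.IsMaximal) ∧
    Nonempty
      ((WittVector p R ⧸
          Ideal.span {(p : WittVector p R), WittVector.teichmuller p ε - 1}) ≃+*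
        (R ⧸ Ideal.span {ε - 1})) := by
  have hμ : constantCoeff (teichmuller p ε - 1) = ε - 1 := by
    rw [map_sub, map_one, constantCoeff_apply, teichmuller_coeff_zero]
  let P₀ : PrimeSpectrum (WittVector p R) := ⟨comap constantCoeff (maximalIdeal R), inferInstance⟩
  have hP₀ (P : PrimeSpectrum (WittVector p R)) :
      (p : WittVector p R) ∈ P.asIdeal ∧ teichmuller p ε - 1 ∈ P.asIdeal ↔ P = P₀ :=
    (mem_and_mem_iff_eq_comap_maximalIdeal (constantCoeff_surjective p) ker_constantCoeff hrank
      (hμ ▸ hps1) (hμ ▸ hps2) P.asIdeal).trans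
      (PrimeSpectrum.ext_iff (x := P) (y := P₀)).symm
  refine ⟨⟨P₀, (hP₀ P₀).2 rfl, fun P hP ↦ (hP₀ P).1 hP⟩, fun P hpP hμP ↦ ?_, ⟨?_⟩⟩
  · rw [(hP₀ P).1 ⟨hpP, hμP⟩]
    exact comap_isMaximal_of_surjective _ (constantCoeff_surjective p)
  · exact (quotientSpanPairEquivOfKerEq (constantCoeff_surjective p) ker_constantCoeff _).trans
      (quotEquivOfEq (by rw [hμ]))

/-- Let `C` be an algebraically closed perfectoid field of mixed characteristic `(0,p)`, and let
`R = O_{C^♭}` be the ring of integers of its tilt: a perfect valuation ring of characteristic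
`p`, of rank one (`hrank`), with algebraically closed fraction field `F`.  Let
`A_inf = W(O_{C^♭})` be the ring of Witt vectors, `ε ∈ O_{C^♭}` the element coming from a
compatible system of `p`-power roots of unity — so that `ε` is a unit, `ε ≠ 1` and `ε - 1` is a
pseudouniformizer (nonzero and not a unit) — and `μ = [ε] - 1` the corresponding element of
`A_inf`, where `[·]` is the Teichmüller lift.  Then the closed subset of `Spec A_inf`
complementary to `Spec A_inf[1/p] ∪ Spec A_inf[1/μ]`, i.e. the set of primes containing both
`p` and `μ`, consists of exactly one point, which is the unique closed (maximal) point;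
equivalently `A_inf/(p, μ) ≅ O_{C^♭}/(ε - 1)`. -/
theorem Ainf_complement_of_punctured_locus_is_closed_point
    (p : ℕ) [hp : Fact p.Prime]
    (R : Type) [CommRing R] [IsDomain R] [ValuationRing R] [CharP R p] [PerfectRing R p]
    (F : Type) [Field F] [Algebra R F] [IsFractionRing R F] [IsAlgClosed F]
    (hrank : ∀ P : PrimeSpectrum R, P.asIdeal = ⊥ ∨ P.asIdeal.IsMaximal)
    (ε : R) (hεunit : IsUnit ε) (hεne : ε ≠ 1)
    (hps1 : ε - 1 ≠ 0) (hps2 : ¬ IsUnit (ε - 1)) :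
    (∃! P : PrimeSpectrum (WittVector p R),
        (p : WittVector p R) ∈ P.asIdeal ∧
          (WittVector.teichmuller p ε - 1) ∈ P.asIdeal) ∧
    (∀ P : PrimeSpectrum (WittVector p R),
        (p : WittVector p R) ∈ P.asIdeal →
          (WittVector.teichmuller p ε - 1) ∈ P.asIdeal → P.asIdeal.IsMaximal) ∧
    Nonempty
      ((WittVector p R ⧸
          Ideal.span {(p : WittVector p R), WittVector.teichmuller p ε - 1}) ≃+*
        (R ⧸ Ideal.span {ε - 1})) :=
  Ainf_complement_of_punctured_locus_is_closed_point_general p (hp := hp) R hrank ε hps1 hps2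
end
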